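/- Let G be a probability measure on ℝ supported in an interval of length R, and let Ĝ_n be the empirical measure of n i.i.d. samples from G. Then E[W_1(G, Ĝ_n)] ≤ R·√(π/(2n)). -/

import Mathlib

/-!
The quantile coupling `t ↦ (q_μ t, q_ν t)`, `t ∈ (0, 1)`, of two laws on `ℝ` costs
`∫₀¹ |q_μ - q_ν| = ∫ |F_μ - F_ν|`: both integrals measure the region between the graphs
of the two distribution functions. Hence `W₁(G, Ĝₙ) ≤ ∫_a^{a+R} |F_G - F_Ĝₙ|` almost surely.
For fixed `x`, `n F_Ĝₙ(x)` is a sum of `n` independent Bernoulli(`F_G x`) variables, so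
`E |F_G x - F_Ĝₙ x| ≤ √(Var F_Ĝₙ x) ≤ 1 / (2√n)`. Integrating in `x` (Fubini) gives
`E W₁ ≤ R / (2√n)`, which is below `R √(π / (2n))`.
-/

open MeasureTheory Set
open scoped ENNReal

/-- The p-th power of the p-Wasserstein distance, defined as the infimum of transport
costs over all couplings.  For `p = 1` this is the 1-Wasserstein distance. -/
noncomputable def WpPow {E : Type*} [NormedAddCommGroup E] [MeasurableSpace E]
    (p : ℝ) (μ ν : Measure E) : ℝ :=
  sInf {c : ℝ | ∃ γ : Measure (E × E),
    γ.map Prod.fst = μ ∧ γ.map Prod.snd = ν ∧ c = ∫ z, ‖z.1 - z.2‖ ^ p ∂γ}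

/-- The empirical measure of the sample points `X 0 ω, …, X (n-1) ω`. -/
noncomputable def empiricalMeasure {Ω : Type*} [MeasurableSpace Ω] {n : ℕ}
    (X : Fin n → Ω → ℝ) (ω : Ω) : Measure ℝ :=
  ((n : ℝ≥0∞)⁻¹) • ∑ i, Measure.dirac (X i ω)


open Filter ProbabilityTheory
open scoped symmDiff

lemma Set.Ici_symmDiff_Ici {α : Type*} [LinearOrder α] (a b : α) :
    Ici a ∆ Ici b = Ico (min a b) (max a b) := by
  ext x
  simp only [mem_symmDiff, mem_Ici, mem_Ico, min_le_iff, lt_max_iff]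
  grind

lemma Set.Iic_symmDiff_Iic {α : Type*} [LinearOrder α] (a b : α) :
    Iic a ∆ Iic b = Ioc (min a b) (max a b) := by
  ext x
  simp only [mem_symmDiff, mem_Iic, mem_Ioc, min_lt_iff, le_max_iff]
  grind

lemma Real.volume_Ici_symmDiff_Ici (a b : ℝ) :
    volume (Ici a ∆ Ici b) = ENNReal.ofReal |a - b| := by
  rw [Ici_symmDiff_Ici, Real.volume_Ico, max_sub_min_eq_abs']

lemma volume_restrict_Ioo_zero_one_of_subset {s : Set ℝ} (hs : s ⊆ Icc 0 1) :
    volume.restrict (Ioo 0 1) s = volume s := by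
  rw [Measure.restrict_congr_set Ioo_ae_eq_Icc, Measure.restrict_eq_self _ hs]

-- Only meaningful for `t ∈ (0, 1)`: elsewhere it is `sInf` of an empty or unbounded set, i.e. `0`.
noncomputable def quantile (μ : Measure ℝ) (t : ℝ) : ℝ :=
  sInf {x | t ≤ cdf μ x}

section Quantile

variable (μ : Measure ℝ)

lemma bddBelow_setOf_le_cdf {t : ℝ} (ht : 0 < t) : BddBelow {x | t ≤ cdf μ x} := by
  obtain ⟨y, hy⟩ := ((tendsto_cdf_atBot μ).eventually (eventually_lt_nhds ht)).exists
  exact ⟨y, fun x hx => le_of_not_ge fun hxy => (hx.trans (monotone_cdf μ hxy)).not_gt hy⟩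

lemma nonempty_setOf_le_cdf {t : ℝ} (ht : t < 1) : {x | t ≤ cdf μ x}.Nonempty :=
  ((tendsto_cdf_atTop μ).eventually (eventually_ge_nhds ht)).exists

lemma quantile_le_iff {t x : ℝ} (ht : t ∈ Ioo 0 1) :
    quantile μ t ≤ x ↔ t ≤ cdf μ x := by
  refine ⟨fun h => ?_, fun h => csInf_le (bddBelow_setOf_le_cdf μ ht.1) h⟩
  have h_gt : ∀ y > x, t ≤ cdf μ y := fun y hy => by
    obtain ⟨z, hz, hzy⟩ := exists_lt_of_csInf_lt (nonempty_setOf_le_cdf μ ht.2) (h.trans_lt hy)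
    exact hz.trans (monotone_cdf μ hzy.le)
  have h_right := (cdf μ).right_continuous x |>.mono_left (nhdsWithin_mono x Ioi_subset_Ici_self)
  exact ge_of_tendsto h_right (eventually_nhdsWithin_of_forall h_gt)

lemma aemeasurable_quantile : AEMeasurable (quantile μ) (volume.restrict (Ioo 0 1)) :=
  aemeasurable_restrict_of_monotoneOn measurableSet_Ioo fun _ hs _ ht hst =>
    csInf_le_csInf (bddBelow_setOf_le_cdf μ hs.1) (nonempty_setOf_le_cdf μ ht.2)
      fun _ hx => hst.trans hx

lemma map_quantile [IsProbabilityMeasure μ] :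
    (volume.restrict (Ioo 0 1)).map (quantile μ) = μ := by
  refine Measure.ext_of_Iic _ _ fun x => ?_
  have h_pre : quantile μ ⁻¹' Iic x =ᵐ[volume.restrict (Ioo 0 1)] Ioc 0 (cdf μ x) := by
    rw [eventuallyEq_set]
    filter_upwards [ae_restrict_mem measurableSet_Ioo] with t ht
    simp [quantile_le_iff μ ht, ht.1]
  rw [Measure.map_apply_of_aemeasurable (aemeasurable_quantile μ) measurableSet_Iic,
    measure_congr h_pre, volume_restrict_Ioo_zero_one_of_subset
      (Ioc_subset_Icc_self.trans (Icc_subset_Icc_right (cdf_le_one μ x))),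
    Real.volume_Ioc, sub_zero, ofReal_cdf]

end Quantile

lemma lintegral_abs_quantile_sub_quantile (μ ν : Measure ℝ) :
    ∫⁻ t in Ioo 0 1, ENNReal.ofReal |quantile μ t - quantile ν t|
      = ∫⁻ x, ENNReal.ofReal |cdf μ x - cdf ν x| := by
  -- The region between the graphs, with `t` on the first axis and `x` on the second.
  set S : Set (ℝ × ℝ) := {p | p.1 ≤ cdf μ p.2} ∆ {p | p.1 ≤ cdf ν p.2}
  have hS : MeasurableSet S :=
    (measurableSet_le measurable_fst ((monotone_cdf μ).measurable.comp measurable_snd)).symmDiff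
      (measurableSet_le measurable_fst ((monotone_cdf ν).measurable.comp measurable_snd))
  have h_slice (t : ℝ) (ht : t ∈ Ioo 0 1) :
      Prod.mk t ⁻¹' S = Ici (quantile μ t) ∆ Ici (quantile ν t) := by
    ext x
    simp [S, mem_symmDiff, quantile_le_iff μ ht, quantile_le_iff ν ht]
  have h_slice' (x : ℝ) : (·, x) ⁻¹' S = Iic (cdf μ x) ∆ Iic (cdf ν x) := rfl
  calc ∫⁻ t in Ioo 0 1, ENNReal.ofReal |quantile μ t - quantile ν t|
      = ∫⁻ t in Ioo 0 1, volume (Prod.mk t ⁻¹' S) :=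
        setLIntegral_congr_fun measurableSet_Ioo fun t ht => by
          rw [h_slice t ht, Real.volume_Ici_symmDiff_Ici]
    _ = (volume.restrict (Ioo 0 1)).prod volume S := (Measure.prod_apply hS).symm
    _ = ∫⁻ x, volume.restrict (Ioo 0 1) ((·, x) ⁻¹' S) := Measure.prod_apply_symm hS
    _ = ∫⁻ x, ENNReal.ofReal |cdf μ x - cdf ν x| := lintegral_congr fun x => by
        rw [h_slice', Iic_symmDiff_Iic, volume_restrict_Ioo_zero_one_of_subset, Real.volume_Ioc,
          max_sub_min_eq_abs']
        exact Ioc_subset_Icc_self.trans <| Icc_subset_Icc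
          (le_min (cdf_nonneg μ x) (cdf_nonneg ν x)) (max_le (cdf_le_one μ x) (cdf_le_one ν x))

lemma WpPow_nonneg {E : Type*} [NormedAddCommGroup E] [MeasurableSpace E]
    (p : ℝ) (μ ν : Measure E) : 0 ≤ WpPow p μ ν :=
  Real.sInf_nonneg fun _ ⟨_, _, _, hc⟩ => hc ▸ integral_nonneg fun _ => by positivity

lemma WpPow_le_integral_of_coupling {E : Type*} [NormedAddCommGroup E] [MeasurableSpace E]
    {p : ℝ} {μ ν : Measure E} (γ : Measure (E × E)) (h₁ : γ.map Prod.fst = μ)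
    (h₂ : γ.map Prod.snd = ν) : WpPow p μ ν ≤ ∫ z, ‖z.1 - z.2‖ ^ p ∂γ :=
  csInf_le ⟨0, fun _ ⟨_, _, _, hc⟩ => hc ▸ integral_nonneg fun _ => by positivity⟩
    ⟨γ, h₁, h₂, rfl⟩

lemma WpPow_one_le_integral_abs_quantile_sub (μ ν : Measure ℝ) [IsProbabilityMeasure μ]
    [IsProbabilityMeasure ν] :
    WpPow 1 μ ν ≤ ∫ t in Ioo 0 1, |quantile μ t - quantile ν t| := by
  have hq := (aemeasurable_quantile μ).prodMk (aemeasurable_quantile ν)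
  have h_map (f : ℝ × ℝ → ℝ) (hf : Measurable f) :
      ((volume.restrict (Ioo 0 1)).map fun t => (quantile μ t, quantile ν t)).map f
        = (volume.restrict (Ioo 0 1)).map fun t => f (quantile μ t, quantile ν t) :=
    AEMeasurable.map_map_of_aemeasurable hf.aemeasurable hq
  refine (WpPow_le_integral_of_coupling _ ((h_map _ measurable_fst).trans (map_quantile μ))
    ((h_map _ measurable_snd).trans (map_quantile ν))).trans_eq ?_
  simp only [Real.rpow_one, Real.norm_eq_abs]
  rw [integral_map hq (by fun_prop)]

section Support

variable {μ : Measure ℝ} [IsProbabilityMeasure μ] {a b x : ℝ}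

lemma cdf_eq_zero_of_lt (hμ : μ (Icc a b) = 1) (hx : x < a) : cdf μ x = 0 := by
  have h_null : μ (Iic x) = 0 :=
    measure_mono_null (fun y (hy : y ≤ x) (hy' : y ∈ Icc a b) => (hy.trans_lt hx).not_ge hy'.1)
      ((prob_compl_eq_zero_iff measurableSet_Icc).mpr hμ)
  rw [cdf_eq_real, measureReal_def, h_null, ENNReal.toReal_zero]

lemma cdf_eq_one_of_le (hμ : μ (Icc a b) = 1) (hx : b ≤ x) : cdf μ x = 1 := by
  have h_full : μ (Iic x) = 1 :=
    le_antisymm prob_le_one (hμ ▸ measure_mono fun _ hy => hy.2.trans hx)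
  rw [cdf_eq_real, measureReal_def, h_full, ENNReal.toReal_one]

end Support

lemma WpPow_one_le_setIntegral_abs_cdf_sub {μ ν : Measure ℝ} [IsProbabilityMeasure μ]
    [IsProbabilityMeasure ν] {a b : ℝ} (hμ : μ (Icc a b) = 1) (hν : ν (Icc a b) = 1) :
    WpPow 1 μ ν ≤ ∫ x in Icc a b, |cdf μ x - cdf ν x| := by
  have h_supp : (fun x => ENNReal.ofReal |cdf μ x - cdf ν x|).support ⊆ Icc a b := by
    intro x hx
    by_contra hx'
    rcases not_and_or.mp hx' with hxa | hxb
    · simp [cdf_eq_zero_of_lt hμ (not_le.mp hxa), cdf_eq_zero_of_lt hν (not_le.mp hxa)] at hx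
    · simp [cdf_eq_one_of_le hμ (not_le.mp hxb).le, cdf_eq_one_of_le hν (not_le.mp hxb).le] at hx
  have h_meas : Measurable fun x => |cdf μ x - cdf ν x| :=
    ((monotone_cdf μ).measurable.sub (monotone_cdf ν).measurable).abs
  calc WpPow 1 μ ν ≤ ∫ t in Ioo 0 1, |quantile μ t - quantile ν t| :=
        WpPow_one_le_integral_abs_quantile_sub μ ν
    _ = (∫⁻ t in Ioo 0 1, ENNReal.ofReal |quantile μ t - quantile ν t|).toReal :=
        integral_eq_lintegral_of_nonneg_ae (ae_of_all _ fun _ => abs_nonneg _)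
          ((aemeasurable_quantile μ).sub (aemeasurable_quantile ν)).abs.aestronglyMeasurable
    _ = (∫⁻ x in Icc a b, ENNReal.ofReal |cdf μ x - cdf ν x|).toReal := by
        rw [lintegral_abs_quantile_sub_quantile, setLIntegral_eq_of_support_subset h_supp]
    _ = ∫ x in Icc a b, |cdf μ x - cdf ν x| :=
        (integral_eq_lintegral_of_nonneg_ae (ae_of_all _ fun _ => abs_nonneg _)
          h_meas.aestronglyMeasurable).symm

section Empirical

variable {Ω : Type*} [MeasurableSpace Ω] {n : ℕ} (X : Fin n → Ω → ℝ) (ω : Ω)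

lemma empiricalMeasure_apply {s : Set ℝ} (hs : MeasurableSet s) :
    empiricalMeasure X ω s = (n : ℝ≥0∞)⁻¹ * ∑ i, s.indicator 1 (X i ω) := by
  simp [empiricalMeasure, Measure.dirac_apply' _ hs]

lemma empiricalMeasure_eq_one (hn : 0 < n) {s : Set ℝ} (hs : MeasurableSet s)
    (hX : ∀ i, X i ω ∈ s) : empiricalMeasure X ω s = 1 := by
  simp [empiricalMeasure_apply X ω hs, indicator_of_mem (hX _),
    ENNReal.inv_mul_cancel (Nat.cast_ne_zero.mpr hn.ne') (ENNReal.natCast_ne_top n)]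

lemma isProbabilityMeasure_empiricalMeasure (hn : 0 < n) :
    IsProbabilityMeasure (empiricalMeasure X ω) :=
  ⟨empiricalMeasure_eq_one X ω hn MeasurableSet.univ fun _ => mem_univ _⟩

lemma cdf_empiricalMeasure (hn : 0 < n) (x : ℝ) :
    cdf (empiricalMeasure X ω) x = (n : ℝ)⁻¹ * ∑ i, (Iic x).indicator 1 (X i ω) := by
  have := isProbabilityMeasure_empiricalMeasure X ω hn
  rw [cdf_eq_real, measureReal_def, empiricalMeasure_apply X ω measurableSet_Iic]
  simp [indicator_apply]

end Empirical

section Variance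

variable {Ω : Type*} [MeasurableSpace Ω] {μ : Measure Ω} [IsProbabilityMeasure μ]

lemma integral_abs_sub_integral_le_sqrt_variance {Y : Ω → ℝ} (hY : MemLp Y 2 μ) :
    ∫ ω, |Y ω - μ[Y]| ∂μ ≤ √(Var[Y; μ]) := by
  have hD : MemLp (fun ω => |Y ω - μ[Y]|) 2 μ := (hY.sub (memLp_const _)).abs
  have h_sq : (∫ ω, |Y ω - μ[Y]| ∂μ) ^ 2 ≤ Var[Y; μ] := by
    have := variance_nonneg (fun ω => |Y ω - μ[Y]|) μ
    rw [variance_eq_sub hD, variance_eq_integral hY.aemeasurable] at *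
    simpa [sq_abs] using this
  exact (le_abs_self _).trans (Real.abs_le_sqrt h_sq)

lemma variance_average_le {ι : Type*} [Fintype ι] {Y : ι → Ω → ℝ} {c d : ℝ}
    (hY : ∀ i, Measurable (Y i)) (hYcd : ∀ i ω, Y i ω ∈ Icc c d)
    (hindep : Pairwise fun i j => IndepFun (Y i) (Y j) μ) :
    Var[fun ω => (Fintype.card ι : ℝ)⁻¹ * ∑ i, Y i ω; μ]
      ≤ ((d - c) / 2) ^ 2 / Fintype.card ι := by
  have hL2 i : MemLp (Y i) 2 μ :=
    memLp_of_bounded (ae_of_all _ (hYcd i)) (hY i).aestronglyMeasurable 2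
  have h_sum : Var[fun ω => ∑ i, Y i ω; μ] ≤ Fintype.card ι * ((d - c) / 2) ^ 2 := by
    rw [← Finset.sum_fn, IndepFun.variance_sum (fun i _ => hL2 i) fun i _ j _ hij => hindep hij]
    refine (Finset.sum_le_sum fun i _ =>
      variance_le_sq_of_bounded (ae_of_all _ (hYcd i)) (hY i).aemeasurable).trans_eq ?_
    simp
  rw [variance_const_mul]
  rcases (Fintype.card ι).eq_zero_or_pos with h | h
  · simp [h]
  · calc _ ≤ ((Fintype.card ι : ℝ)⁻¹) ^ 2 * (Fintype.card ι * ((d - c) / 2) ^ 2) := by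
          gcongr
      _ = _ := by field_simp

end Variance

section Samples

variable {Ω : Type*} [MeasurableSpace Ω] {P : Measure Ω} [IsProbabilityMeasure P] {n : ℕ}
  {X : Fin n → Ω → ℝ} {G : Measure ℝ}

lemma integral_abs_cdf_sub_cdf_empiricalMeasure_le [IsProbabilityMeasure G] (hn : 0 < n)
    (hXm : ∀ i, Measurable (X i)) (hindep : iIndepFun X P) (hlaw : ∀ i, P.map (X i) = G) (x : ℝ) :
    ∫ ω, |cdf G x - cdf (empiricalMeasure X ω) x| ∂P ≤ √(1 / (4 * n)) := by
  set Y : Fin n → Ω → ℝ := fun i => (Iic x).indicator 1 ∘ X i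
  set S : Ω → ℝ := fun ω => (Fintype.card (Fin n) : ℝ)⁻¹ * ∑ i, Y i ω
  have h_ind : Measurable ((Iic x).indicator (1 : ℝ → ℝ)) :=
    measurable_one.indicator measurableSet_Iic
  have hY i : Measurable (Y i) := h_ind.comp (hXm i)
  have hY01 i ω : Y i ω ∈ Icc 0 1 := by
    by_cases h : X i ω ≤ x <;> simp [Y, h]
  have hYL2 i : MemLp (Y i) 2 P :=
    memLp_of_bounded (ae_of_all _ (hY01 i)) (hY i).aestronglyMeasurable 2
  have hYi i : P[Y i] = cdf G x := by
    change ∫ ω, (Iic x).indicator 1 (X i ω) ∂P = _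
    rw [← integral_map (hXm i).aemeasurable h_ind.aestronglyMeasurable, hlaw i,
      integral_indicator_one measurableSet_Iic, cdf_eq_real]
  have h_mean : P[S] = cdf G x := by
    simp only [S, integral_const_mul,
      integral_finsetSum _ fun i _ => (hYL2 i).integrable one_le_two]
    simp [hYi, hn.ne']
  have hS : MemLp S 2 P := (memLp_finsetSum _ fun i _ => hYL2 i).const_mul _
  calc ∫ ω, |cdf G x - cdf (empiricalMeasure X ω) x| ∂P = ∫ ω, |S ω - P[S]| ∂P := by
        simp_rw [cdf_empiricalMeasure X _ hn, h_mean, abs_sub_comm (cdf G x)]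
        simp [S, Y]
    _ ≤ √(Var[S; P]) := integral_abs_sub_integral_le_sqrt_variance hS
    _ ≤ √(1 / (4 * n)) := Real.sqrt_le_sqrt <| (variance_average_le hY hY01 fun i j hij =>
        (hindep.comp _ fun _ => h_ind).indepFun hij).trans_eq (by simp; ring)

lemma integrable_abs_cdf_sub_cdf_empiricalMeasure (hn : 0 < n) (hXm : ∀ i, Measurable (X i))
    {s : Set ℝ} (hs : volume s ≠ ∞) :
    Integrable (Function.uncurry fun ω x => |cdf G x - cdf (empiricalMeasure X ω) x|)
      (P.prod (volume.restrict s)) := by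
  have := isFiniteMeasure_restrict.mpr hs
  have h_meas : Measurable fun p : Ω × ℝ => cdf (empiricalMeasure X p.1) p.2 := by
    simp_rw [cdf_empiricalMeasure X _ hn]
    exact measurable_const.mul <| Finset.measurable_sum _ fun i _ =>
      measurable_one.indicator (measurableSet_le ((hXm i).comp measurable_fst) measurable_snd)
  refine Integrable.of_bound (((monotone_cdf G).measurable.comp measurable_snd).sub
    h_meas).abs.aestronglyMeasurable 1 (ae_of_all _ fun ⟨ω, x⟩ => ?_)
  rw [Function.uncurry_apply_pair, Real.norm_eq_abs, abs_abs, abs_sub_le_iff]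
  constructor <;> linarith [cdf_nonneg G x, cdf_le_one G x,
    cdf_nonneg (empiricalMeasure X ω) x, cdf_le_one (empiricalMeasure X ω) x]

end Samples

/-- Expected 1-Wasserstein error of the empirical measure of `n` i.i.d. samples from a
distribution supported in an interval of length `R`. -/
theorem empirical_W1_bound {Ω : Type*} [MeasurableSpace Ω] (P : Measure Ω)
    [IsProbabilityMeasure P] (n : ℕ) (hn : 0 < n)
    (G : Measure ℝ) [IsProbabilityMeasure G]
    (R a : ℝ) (hR : 0 ≤ R) (hsupp : G (Icc a (a + R)) = 1)
    (X : Fin n → Ω → ℝ) (hXm : ∀ i, Measurable (X i))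
    (hiid : ProbabilityTheory.iIndepFun X P)
    (hlaw : ∀ i, P.map (X i) = G) :
    ∫ ω, WpPow 1 G (empiricalMeasure X ω) ∂P ≤ R * Real.sqrt (Real.pi / (2 * n)) := by
  have h_samples : ∀ᵐ ω ∂P, ∀ i, X i ω ∈ Icc a (a + R) := ae_all_iff.mpr fun i =>
    ae_of_ae_map (hXm i).aemeasurable <| by
      rw [hlaw i]
      exact (prob_compl_eq_zero_iff measurableSet_Icc).mpr hsupp
  have hint := integrable_abs_cdf_sub_cdf_empiricalMeasure (P := P) (G := G) hn hXm
    (measure_Icc_lt_top (a := a) (b := a + R)).ne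
  calc ∫ ω, WpPow 1 G (empiricalMeasure X ω) ∂P
      ≤ ∫ ω, (∫ x in Icc a (a + R), |cdf G x - cdf (empiricalMeasure X ω) x|) ∂P :=
        integral_mono_of_nonneg (ae_of_all _ fun _ => WpPow_nonneg _ _ _) hint.integral_prod_left
          (h_samples.mono fun ω hω => by
            have := isProbabilityMeasure_empiricalMeasure X ω hn
            exact WpPow_one_le_setIntegral_abs_cdf_sub hsupp
              (empiricalMeasure_eq_one X ω hn measurableSet_Icc hω))
    _ = ∫ x in Icc a (a + R), ∫ ω, |cdf G x - cdf (empiricalMeasure X ω) x| ∂P :=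
        integral_integral_swap hint
    _ ≤ ∫ x in Icc a (a + R), √(1 / (4 * n)) :=
        integral_mono hint.integral_prod_right (integrable_const _) fun x =>
          integral_abs_cdf_sub_cdf_empiricalMeasure_le hn hXm hiid hlaw x
    _ = R * √(1 / (4 * n)) := by simp [Real.volume_real_Icc, hR]
    _ ≤ R * √(Real.pi / (2 * n)) := by
        gcongr
        · linarith [Real.pi_gt_three]
        · norm_num
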